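/- Deterministic piecewise-in-time underestimation: with a time grid t = t₀ < t₁ < … < t_{n} = T, let x : [t,T] → ℝⁿ be C¹ with x'(s) = f(x(s),u(s)), (x(s),u(s)) ∈ X × U. Suppose w₁,…,w_n : ℝ × ℝⁿ → ℝ are C¹ and satisfy: (i) ∂w_i/∂t(s,y) + f(y,v)ᵀ∇ₓw_i(s,y) + ℓ(y,v) ≥ 0 for all (s,y,v) ∈ [t_{i-1},t_i] × X × U; (ii) w_i(t_{i-1}, y) ≥ w_{i-1}(t_{i-1}, y) for all y ∈ X and 2 ≤ i ≤ n; (iii) w_n(T, y) ≤ φ(y) for all y ∈ X. Then w₁(t, x(t)) ≤ ∫ₜᵀ ℓ(x(s),u(s)) ds + φ(x(T)). -/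

import Mathlib

/-!
Along the trajectory, `s ↦ wᵢ(s, x s)` has derivative `∂ₜwᵢ + Dₓwᵢ (f (x s, u s))`, which by the
generator inequality is at least `-ℓ (x s, u s)`; integrating over the `i`-th interval bounds the
value of `wᵢ` at its left end by the running cost plus its value at the right end. Monotonicity
at the breakpoints chains these bounds into one over `[t, T]`, and the terminal inequality
replaces the final value by `φ (x T)`.
-/

open Set MeasureTheory

section

variable {E : Type*} [NormedAddCommGroup E] [NormedSpace ℝ E]

theorem DifferentiableAt.hasDerivAt_comp_graph {W : ℝ → E → ℝ} {x : ℝ → E} {x' : E} {s : ℝ}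
    (hW : DifferentiableAt ℝ (fun p : ℝ × E => W p.1 p.2) (s, x s)) (hx : HasDerivAt x x' s) :
    HasDerivAt (fun r => W r (x r))
      (deriv (fun r => W r (x s)) s + fderiv ℝ (W s) (x s) x') s := by
  set D := fderiv ℝ (fun p : ℝ × E => W p.1 p.2) (s, x s)
  have hD : HasFDerivAt (fun p : ℝ × E => W p.1 p.2) D (s, x s) := hW.hasFDerivAt
  have htime : HasDerivAt (fun r => W r (x s)) (D (1, 0)) s :=
    hD.comp_hasDerivAt (f := fun r => (r, x s)) s
      ((hasDerivAt_id s).prodMk (hasDerivAt_const s (x s)))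
  have hspace : HasFDerivAt (W s) (D.comp (.inr ℝ ℝ E)) (x s) :=
    hD.comp (x s) (hasFDerivAt_prodMk_right s (x s))
  rw [htime.deriv, hspace.fderiv, ContinuousLinearMap.comp_apply, ← map_add]
  have hsum : ((1 : ℝ), (0 : E)) + ContinuousLinearMap.inr ℝ ℝ E x' = (1, x') := by simp
  rw [hsum]
  exact hD.comp_hasDerivAt (f := fun r => (r, x r)) s ((hasDerivAt_id s).prodMk hx)

theorem le_integral_add_of_hjb_ineq_along {a b : ℝ} (hab : a ≤ b) {W : ℝ → E → ℝ}
    {x x' : ℝ → E} {L : ℝ → ℝ}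
    (hW : ∀ s ∈ Icc a b, DifferentiableAt ℝ (fun p : ℝ × E => W p.1 p.2) (s, x s))
    (hx : ∀ s ∈ Icc a b, HasDerivAt x (x' s) s) (hL : IntervalIntegrable L volume a b)
    (hineq : ∀ s ∈ Ioo a b,
      0 ≤ deriv (fun r => W r (x s)) s + fderiv ℝ (W s) (x s) (x' s) + L s) :
    W a (x a) ≤ (∫ s in a..b, L s) + W b (x b) := by
  have hderiv : ∀ s ∈ Icc a b, HasDerivAt (fun r => W r (x r))
      (deriv (fun r => W r (x s)) s + fderiv ℝ (W s) (x s) (x' s)) s :=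
    fun s hs => (hW s hs).hasDerivAt_comp_graph (hx s hs)
  have hle := intervalIntegral.integral_le_sub_of_hasDeriv_right_of_le hab
    (fun s hs => (hderiv s hs).continuousAt.continuousWithinAt)
    (fun s hs => (hderiv s (Ioo_subset_Icc_self hs)).hasDerivWithinAt)
    ((intervalIntegrable_iff_integrableOn_Icc_of_le hab).mp hL).neg
    (fun s hs => neg_le_iff_add_nonneg.mpr (by linarith [hineq s hs]))
  rw [Pi.neg_def, intervalIntegral.integral_neg] at hle
  linarith

end

theorem le_integral_add_of_piecewise {L : ℝ → ℝ} {N : ℕ} {τ : Fin (N + 2) → ℝ}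
    (hτ : Monotone τ) (hL : IntervalIntegrable L volume (τ 0) (τ (Fin.last _)))
    {V : Fin (N + 1) → ℝ → ℝ}
    (hpiece : ∀ i : Fin (N + 1),
      V i (τ i.castSucc) ≤ (∫ s in τ i.castSucc..τ i.succ, L s) + V i (τ i.succ))
    (hlink : ∀ i : Fin N, V i.castSucc (τ i.succ.castSucc) ≤ V i.succ (τ i.succ.castSucc)) :
    V 0 (τ 0) ≤ (∫ s in τ 0..τ (Fin.last _), L s) + V (Fin.last N) (τ (Fin.last _)) := by
  induction N with
  | zero => simpa using hpiece 0
  | succ N ih =>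
    have hint : ∀ i j, IntervalIntegrable L volume (τ i) (τ j) := fun i j =>
      hL.mono_set <| uIcc_subset_uIcc
        (mem_uIcc_of_le (hτ (Fin.zero_le i)) (hτ (Fin.le_last i)))
        (mem_uIcc_of_le (hτ (Fin.zero_le j)) (hτ (Fin.le_last j)))
    have hprev := ih (hτ.comp Fin.strictMono_castSucc.monotone) (hint _ _)
      (fun i => by simpa only [Function.comp_apply, Fin.succ_castSucc] using hpiece i.castSucc)
      (fun i => by simpa only [Function.comp_apply, Fin.succ_castSucc] using hlink i.castSucc)
    have hadd := intervalIntegral.integral_add_adjacent_intervals (hint 0 (Fin.last _).castSucc)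
      (hint _ (Fin.last _))
    have hlast := hlink (Fin.last N)
    have hfinal := hpiece (Fin.last _)
    simp only [Function.comp_apply, Fin.castSucc_zero, Fin.succ_last] at hprev hlast hfinal
    linarith

/-- Deterministic piecewise-in-time underestimation: with a time grid
`t = τ₀ < τ₁ < … < τₙ = T`, piecewise subsolutions `w₁,…,wₙ` of the HJB inequality which are
monotone across breakpoints and satisfy the terminal inequality underestimate the control
cost along any admissible trajectory. (Here `w i` covers `[τ_i, τ_{i+1}]`, `0`-indexed.) -/
theorem piecewise_deterministic_underestimation
    (n m nP : ℕ) (hnP : 0 < nP)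
    (X : Set (Fin n → ℝ)) (U : Set (Fin m → ℝ))
    (f : (Fin n → ℝ) × (Fin m → ℝ) → Fin n → ℝ)
    (ℓ : (Fin n → ℝ) × (Fin m → ℝ) → ℝ) (φ : (Fin n → ℝ) → ℝ)
    (t T : ℝ)
    (τ : Fin (nP + 1) → ℝ) (hτmono : StrictMono τ) (hτ0 : τ 0 = t) (hτT : τ (Fin.last nP) = T)
    (x : ℝ → Fin n → ℝ) (u : ℝ → Fin m → ℝ)
    (hx : ∀ s ∈ Set.Icc t T, HasDerivAt x (f (x s, u s)) s)
    (hmem : ∀ s ∈ Set.Icc t T, x s ∈ X ∧ u s ∈ U)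
    (hℓint : IntervalIntegrable (fun s => ℓ (x s, u s)) volume t T)
    (w : Fin nP → ℝ → (Fin n → ℝ) → ℝ)
    (hw : ∀ i, ContDiff ℝ 1 (fun p : ℝ × (Fin n → ℝ) => w i p.1 p.2))
    -- (i) generator inequality on each time interval
    (hineq : ∀ i : Fin nP, ∀ s ∈ Set.Icc (τ i.castSucc) (τ i.succ), ∀ y ∈ X, ∀ v ∈ U,
        0 ≤ deriv (fun r => w i r y) s + fderiv ℝ (w i s) y (f (y, v)) + ℓ (y, v))
    -- (ii) monotonicity at interior breakpoints
    (hmono : ∀ (i : ℕ) (h : i + 1 < nP), ∀ y ∈ X,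
        w ⟨i, by omega⟩ (τ ⟨i + 1, by omega⟩) y ≤ w ⟨i + 1, h⟩ (τ ⟨i + 1, by omega⟩) y)
    -- (iii) terminal inequality
    (hterm : ∀ y ∈ X, w ⟨nP - 1, by omega⟩ T y ≤ φ y) :
    w ⟨0, hnP⟩ t (x t) ≤ (∫ s in t..T, ℓ (x s, u s)) + φ (x T) := by
  obtain ⟨N, rfl⟩ : ∃ N, nP = N + 1 := ⟨nP - 1, by omega⟩
  have hgrid : ∀ j, τ j ∈ Icc t T := fun j =>
    ⟨hτ0 ▸ hτmono.monotone (Fin.zero_le j), hτT ▸ hτmono.monotone (Fin.le_last j)⟩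
  have htT : t ≤ T := (hgrid 0).1.trans (hgrid 0).2
  have hpiece : ∀ i : Fin (N + 1), w i (τ i.castSucc) (x (τ i.castSucc)) ≤
      (∫ s in τ i.castSucc..τ i.succ, ℓ (x s, u s)) + w i (τ i.succ) (x (τ i.succ)) := by
    intro i
    have hle : τ i.castSucc ≤ τ i.succ := hτmono.monotone (Fin.castSucc_le_succ i)
    have hsub : Icc (τ i.castSucc) (τ i.succ) ⊆ Icc t T :=
      Icc_subset_Icc (hgrid _).1 (hgrid _).2
    refine le_integral_add_of_hjb_ineq_along hle
      (fun s _ => (hw i).differentiable one_ne_zero _) (fun s hs => hx s (hsub hs))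
      (hℓint.mono_set (by rwa [uIcc_of_le hle, uIcc_of_le htT])) fun s hs => ?_
    have hs' := hsub (Ioo_subset_Icc_self hs)
    exact hineq i s (Ioo_subset_Icc_self hs) _ (hmem s hs').1 _ (hmem s hs').2
  have hchain := le_integral_add_of_piecewise (V := fun i s => w i s (x s)) hτmono.monotone
    (hτ0 ▸ hτT ▸ hℓint) hpiece fun i => hmono i (by omega) _ (hmem _ (hgrid _)).1
  rw [hτ0, hτT] at hchain
  calc w ⟨0, hnP⟩ t (x t) ≤ _ := hchain
    _ ≤ _ := by gcongr; exact hterm _ (hmem T ⟨htT, le_rfl⟩).1
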